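/- arXiv:1808.06789 — 4 statements merged into one kernel-verified Lean document; each statement's English description precedes it below -/
import Mathlib

section
/- Let a₁ < d, b₁ ∈ (0, a₁], a₁ + b₁ > d, and a₂, b₂ ≥ 0 (with a₂ ≥ b₂ if a₁ = b₁). There is a constant C = C(d,a₁,a₂,b₁,b₂) < ∞, independent of L ≥ 1, such that for all x ∈ ℤ^d, ∑_{y ∈ ℤ^d} [⟨x−y⟩_L^{−a₁}/(log⟨(x−y)/L⟩₁)^{a₂}] · [⟨y⟩_L^{−b₁}/(log⟨y/L⟩₁)^{b₂}] ≤ C · ⟨x⟩_L^{d−a₁−b₁}/(log⟨x/L⟩₁)^{b₂}. -/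
open Real

/-- Euclidean norm on `ℤ^d`. -/
noncomputable def znorm {d : ℕ} (x : Fin d → ℤ) : ℝ :=
  Real.sqrt (∑ i, ((x i : ℝ)) ^ 2)

/-- `⟨x⟩_L = (π/2) · max(|x|, L)`. -/
noncomputable def veeZ {d : ℕ} (x : Fin d → ℤ) (L : ℝ) : ℝ :=
  (Real.pi / 2) * max (znorm x) L

/-- `log⟨x/L⟩₁ = log((π/2) · max(|x|/L, 1))`. -/
noncomputable def logveeZ {d : ℕ} (x : Fin d → ℤ) (L : ℝ) : ℝ :=
  Real.log ((Real.pi / 2) * max (znorm x / L) 1)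

/-!
Split `ℤ^d` into three regions according to `y`. Near `x` (`2|x - y| ≤ max(|x|, L)`) the second
factor is comparable to its value at `x`, and the ball sum of `⟨x - y⟩_L ^ (-a₁)` is
`O(⟨x⟩_L ^ (d - a₁))` because `a₁ < d`. Near `0` the first factor is comparable to `⟨x⟩_L ^ (-a₁)`,
but the logarithm of `y` has to be kept: the ball sum of `⟨y⟩_L ^ (-b₁) / log ^ b₂` is still
`O(⟨x⟩_L ^ (d - b₁) / log ^ b₂)` since the points with `log⟨y/L⟩₁ < log⟨x/L⟩₁ / 2` fill only a
ball of radius `≈ √(⟨x⟩_L L)`. Far from both, the product is at most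
`⟨x - y⟩_L ^ (-(a₁ + b₁)) + ⟨y⟩_L ^ (-(a₁ + b₁))`, whose tail beyond `⟨x⟩_L / 2` is
`O(⟨x⟩_L ^ (d - a₁ - b₁))` because `a₁ + b₁ > d`. Ball and tail sums are estimated by counting
lattice points in dyadic shells.
-/

open Finset

lemma Finset.sum_le_sum_filter_add_sum_filter {ι M : Type*} [AddCommMonoid M] [PartialOrder M]
    [IsOrderedAddMonoid M] {s : Finset ι} {f : ι → M} {p q : ι → Prop} [DecidablePred p]
    [DecidablePred q] (hf : ∀ i ∈ s, 0 ≤ f i) (h : ∀ i ∈ s, p i ∨ q i) :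
    ∑ i ∈ s, f i ≤ ∑ i ∈ s with p i, f i + ∑ i ∈ s with q i, f i := by
  classical
  rw [← sum_union_inter, ← filter_or, filter_true_of_mem h]
  exact le_add_of_nonneg_right
    (sum_nonneg fun i hi => hf i (mem_filter.1 (mem_inter.1 hi).1).1)

section
variable {d : ℕ}

lemma znorm_eq_norm (x : Fin d → ℤ) : znorm x = ‖WithLp.toLp 2 (fun i => (x i : ℝ))‖ := by
  simp [znorm, EuclideanSpace.norm_eq]

lemma znorm_nonneg (x : Fin d → ℤ) : 0 ≤ znorm x := sqrt_nonneg _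

lemma abs_apply_le_znorm (x : Fin d → ℤ) (i : Fin d) : |(x i : ℝ)| ≤ znorm x := by
  simpa [znorm_eq_norm] using PiLp.norm_apply_le (WithLp.toLp 2 (fun i => (x i : ℝ))) i

lemma znorm_le_znorm_sub_add (x y : Fin d → ℤ) : znorm x ≤ znorm (x - y) + znorm y := by
  have h := norm_le_norm_add_norm_sub' (WithLp.toLp 2 (fun i => (x i : ℝ)))
    (WithLp.toLp 2 (fun i => (y i : ℝ)))
  have hsub : (fun i => ((x - y) i : ℝ)) = (fun i => (x i : ℝ)) - fun i => (y i : ℝ) := by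
    ext i; simp
  rwa [znorm_eq_norm, znorm_eq_norm, znorm_eq_norm, add_comm, hsub]

lemma card_le_of_znorm_le {r : ℝ} (hr : 1 ≤ r) (s : Finset (Fin d → ℤ))
    (hs : ∀ z ∈ s, znorm z ≤ r) : (#s : ℝ) ≤ (3 * r) ^ d := by
  set N : ℕ := ⌊r⌋₊
  have hsub : s ⊆ Fintype.piFinset fun _ => Icc (-(N : ℤ)) N := by
    intro z hz
    simp only [Fintype.mem_piFinset, mem_Icc, ← abs_le]
    intro i
    have hzr : ((|z i| : ℤ) : ℝ) ≤ r := by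
      push_cast; exact (abs_apply_le_znorm z i).trans (hs z hz)
    change |z i| ≤ (⌊r⌋₊ : ℤ)
    rw [Int.natCast_floor_eq_floor (by linarith)]
    exact Int.le_floor.mpr hzr
  have hcard : #s ≤ (2 * N + 1) ^ d := by
    refine (card_le_card hsub).trans_eq ?_
    rw [Fintype.card_piFinset, prod_const, card_univ, Fintype.card_fin, Int.card_Icc]
    congr 1
    omega
  have hN : (N : ℝ) ≤ r := Nat.floor_le (by linarith)
  calc (#s : ℝ) ≤ ((2 * N + 1 : ℕ) : ℝ) ^ d := by exact_mod_cast hcard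
    _ ≤ (3 * r) ^ d := by gcongr; push_cast; linarith

lemma one_lt_pi_div_two : 1 < π / 2 := by linarith [pi_gt_three]

lemma veeZ_pos {L : ℝ} (hL : 0 < L) (z : Fin d → ℤ) : 0 < veeZ z L :=
  mul_pos (by positivity) (hL.trans_le (le_max_right _ _))

lemma mul_le_veeZ (z : Fin d → ℤ) (L : ℝ) : π / 2 * L ≤ veeZ z L :=
  mul_le_mul_of_nonneg_left (le_max_right _ _) (by positivity)

lemma znorm_le_veeZ (z : Fin d → ℤ) (L : ℝ) : znorm z ≤ veeZ z L := by
  have h : znorm z ≤ max (znorm z) L := le_max_left _ _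
  have := one_lt_pi_div_two
  unfold veeZ
  nlinarith [znorm_nonneg z]

lemma max_znorm_le_add (x y : Fin d → ℤ) (L : ℝ) :
    max (znorm x) L ≤ max (znorm y) L + znorm (x - y) := by
  have := znorm_le_znorm_sub_add x y
  have := znorm_nonneg (x - y)
  have := le_max_left (znorm y) L
  have := le_max_right (znorm y) L
  exact max_le (by linarith) (by linarith)

lemma veeZ_trichotomy (x y : Fin d → ℤ) (L : ℝ) :
    (veeZ (x - y) L ≤ veeZ x L ∧ veeZ x L ≤ 2 * veeZ y L) ∨
    (veeZ y L ≤ veeZ x L ∧ veeZ x L ≤ 2 * veeZ (x - y) L) ∨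
    (veeZ x L ≤ 2 * veeZ y L ∧ veeZ x L ≤ 2 * veeZ (x - y) L) := by
  have hpi : (0 : ℝ) < π / 2 := by positivity
  simp only [veeZ, mul_left_comm (2 : ℝ), mul_le_mul_iff_right₀ hpi]
  set m := max (znorm x) L
  have hm : 0 ≤ m := (znorm_nonneg x).trans (le_max_left _ _)
  have hy := max_znorm_le_add x y L
  have hxy := max_znorm_le_add x (x - y) L
  rw [sub_sub_cancel] at hxy
  by_cases h₁ : 2 * znorm (x - y) ≤ m
  · exact Or.inl ⟨max_le (by linarith) (le_max_right _ _), by linarith⟩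
  by_cases h₂ : 2 * znorm y ≤ m
  · exact Or.inr (Or.inl ⟨max_le (by linarith) (le_max_right _ _), by linarith⟩)
  refine Or.inr (Or.inr ⟨?_, ?_⟩)
  · linarith [le_max_left (znorm y) L]
  · linarith [le_max_left (znorm (x - y)) L]

lemma sum_veeZ_rpow_neg_le_of_shell {c r L : ℝ} (hc : 0 ≤ c) (hr : 1 ≤ r)
    (s : Finset (Fin d → ℤ)) (hs : ∀ z ∈ s, r ≤ veeZ z L ∧ veeZ z L ≤ 2 * r) :
    ∑ z ∈ s, veeZ z L ^ (-c) ≤ 6 ^ d * r ^ ((d : ℝ) - c) := by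
  have hr0 : 0 < r := by linarith
  calc ∑ z ∈ s, veeZ z L ^ (-c) ≤ ∑ _z ∈ s, r ^ (-c) :=
        sum_le_sum fun z hz => rpow_le_rpow_of_nonpos hr0 (hs z hz).1 (by linarith)
    _ = #s * r ^ (-c) := by rw [sum_const, nsmul_eq_mul]
    _ ≤ (3 * (2 * r)) ^ d * r ^ (-c) := by
        gcongr
        exact card_le_of_znorm_le (by linarith) s fun z hz => (znorm_le_veeZ z L).trans (hs z hz).2
    _ = 6 ^ d * r ^ ((d : ℝ) - c) := by
        rw [sub_eq_add_neg, rpow_add hr0, rpow_natCast]; ring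

/-- Decompose into the shells `2 ^ k * r ≤ veeZ z L ≤ 2 ^ (k + 1) * r`. -/
lemma sum_veeZ_rpow_neg_le_geom_sum {c r L : ℝ} (hc : 0 ≤ c) (hr : 1 ≤ r) (n : ℕ)
    (s : Finset (Fin d → ℤ)) (hs : ∀ z ∈ s, r ≤ veeZ z L ∧ veeZ z L ≤ 2 ^ (n + 1) * r) :
    ∑ z ∈ s, veeZ z L ^ (-c) ≤
      6 ^ d * r ^ ((d : ℝ) - c) * ∑ k ∈ range (n + 1), ((2 : ℝ) ^ ((d : ℝ) - c)) ^ k := by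
  induction n generalizing s with
  | zero =>
    simpa using sum_veeZ_rpow_neg_le_of_shell hc hr s (by simpa using hs)
  | succ n ih =>
    rw [← sum_filter_add_sum_filter_not s (fun z => veeZ z L ≤ 2 ^ (n + 1) * r), sum_range_succ,
      mul_add]
    refine add_le_add (ih _ fun z hz => ⟨(hs z (mem_filter.1 hz).1).1, (mem_filter.1 hz).2⟩) ?_
    calc _ ≤ 6 ^ d * (2 ^ (n + 1) * r) ^ ((d : ℝ) - c) :=
          sum_veeZ_rpow_neg_le_of_shell hc
            (by nlinarith [one_le_pow₀ (M₀ := ℝ) (n := n + 1) one_le_two]) _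
            fun z hz => ⟨(not_le.1 (mem_filter.1 hz).2).le,
              by rw [← mul_assoc, ← pow_succ']; exact (hs z (mem_filter.1 hz).1).2⟩
      _ = _ := by
          rw [mul_rpow (by positivity) (by linarith), ← rpow_pow_comm (by norm_num)]; ring

lemma exists_sum_veeZ_rpow_neg_le_of_lt {c : ℝ} (hc : 0 ≤ c) (hcd : c < d) :
    ∃ C > 0, ∀ L R : ℝ, 1 ≤ L → π / 2 * L ≤ R → ∀ s : Finset (Fin d → ℤ),
      (∀ z ∈ s, veeZ z L ≤ R) → ∑ z ∈ s, veeZ z L ^ (-c) ≤ C * R ^ ((d : ℝ) - c) := by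
  set q : ℝ := 2 ^ ((d : ℝ) - c)
  have hq : 1 < q := one_lt_rpow one_lt_two (by linarith)
  refine ⟨6 ^ d * q / (q - 1), by have := sub_pos.2 hq; positivity, ?_⟩
  intro L R hL hR s hs
  set r := π / 2 * L
  have hr : 1 ≤ r := one_le_mul_of_one_le_of_one_le one_lt_pi_div_two.le hL
  obtain ⟨n, hnR, hRn⟩ := exists_nat_pow_near ((one_le_div (by linarith)).2 hR) one_lt_two
  rw [le_div_iff₀ (by linarith)] at hnR
  rw [div_lt_iff₀ (by linarith)] at hRn
  have hgeom : ∑ k ∈ range (n + 1), q ^ k ≤ q ^ (n + 1) / (q - 1) := by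
    rw [geom_sum_eq hq.ne']
    gcongr
    linarith
  have hscale : r ^ ((d : ℝ) - c) * q ^ n ≤ R ^ ((d : ℝ) - c) := by
    rw [rpow_pow_comm (by norm_num), ← mul_rpow (by linarith) (by positivity), mul_comm r]
    exact rpow_le_rpow (by positivity) hnR (by linarith)
  calc ∑ z ∈ s, veeZ z L ^ (-c)
      ≤ 6 ^ d * r ^ ((d : ℝ) - c) * ∑ k ∈ range (n + 1), q ^ k :=
        sum_veeZ_rpow_neg_le_geom_sum hc hr n s
          fun z hz => ⟨mul_le_veeZ z L, (hs z hz).trans hRn.le⟩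
    _ ≤ 6 ^ d * r ^ ((d : ℝ) - c) * (q ^ (n + 1) / (q - 1)) := by gcongr
    _ = 6 ^ d * q / (q - 1) * (r ^ ((d : ℝ) - c) * q ^ n) := by ring
    _ ≤ 6 ^ d * q / (q - 1) * R ^ ((d : ℝ) - c) := by
        have := sub_pos.2 hq; gcongr

lemma exists_sum_veeZ_rpow_neg_le_of_gt {c : ℝ} (hcd : d < c) :
    ∃ C > 0, ∀ L R : ℝ, 1 ≤ L → 0 < R → ∀ s : Finset (Fin d → ℤ),
      (∀ z ∈ s, R ≤ veeZ z L) → ∑ z ∈ s, veeZ z L ^ (-c) ≤ C * R ^ ((d : ℝ) - c) := by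
  set q : ℝ := 2 ^ ((d : ℝ) - c)
  have hq : q < 1 := rpow_lt_one_of_one_lt_of_neg one_lt_two (by linarith)
  have hq0 : 0 < q := by positivity
  refine ⟨6 ^ d * (1 - q)⁻¹, by have := sub_pos.2 hq; positivity, ?_⟩
  intro L R hL hR s hs
  set r := max R (π / 2 * L)
  have hr : 1 ≤ r := le_max_of_le_right (by nlinarith [one_lt_pi_div_two])
  have hL0 : 0 < L := by linarith
  obtain ⟨n, hn⟩ := pow_unbounded_of_one_lt (∑ z ∈ s, veeZ z L) one_lt_two
  have hcover : ∀ z ∈ s, veeZ z L ≤ 2 ^ (n + 1) * r := fun z hz =>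
    calc veeZ z L ≤ ∑ z ∈ s, veeZ z L :=
          single_le_sum (fun z _ => (veeZ_pos hL0 z).le) hz
      _ ≤ 2 ^ (n + 1) * r := by
          have : (2 : ℝ) ^ n ≤ 2 ^ (n + 1) := pow_le_pow_right₀ one_le_two n.le_succ
          nlinarith [pow_pos (two_pos (α := ℝ)) (n + 1)]
  have hgeom : ∑ k ∈ range (n + 1), q ^ k ≤ (1 - q)⁻¹ := by
    have := geom_sum_Ico_le_of_lt_one (m := 0) (n := n + 1) hq0.le hq
    rwa [← range_eq_Ico, pow_zero, one_div] at this
  calc ∑ z ∈ s, veeZ z L ^ (-c)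
      ≤ 6 ^ d * r ^ ((d : ℝ) - c) * ∑ k ∈ range (n + 1), q ^ k :=
        sum_veeZ_rpow_neg_le_geom_sum (by linarith [Nat.cast_nonneg (α := ℝ) d]) hr n s
          fun z hz => ⟨max_le (hs z hz) (mul_le_veeZ z L), hcover z hz⟩
    _ ≤ 6 ^ d * R ^ ((d : ℝ) - c) * (1 - q)⁻¹ := by
        refine mul_le_mul_of_nonneg' (mul_le_mul_of_nonneg_left ?_ (by positivity))
          hgeom (sum_nonneg fun k _ => by positivity) (by positivity)
        exact rpow_le_rpow_of_nonpos hR (le_max_left _ _) (by linarith)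
    _ = 6 ^ d * (1 - q)⁻¹ * R ^ ((d : ℝ) - c) := by ring

lemma logveeZ_eq_log_div {L : ℝ} (hL : 0 < L) (z : Fin d → ℤ) :
    logveeZ z L = log (veeZ z L / L) := by
  rw [logveeZ, veeZ, mul_div_assoc, ← max_div_div_right hL.le, div_self hL.ne']

lemma log_pi_div_two_pos : 0 < log (π / 2) := log_pos one_lt_pi_div_two

lemma log_pi_div_two_le_logveeZ {L : ℝ} (hL : 1 ≤ L) (z : Fin d → ℤ) :
    log (π / 2) ≤ logveeZ z L := by
  have hL0 : 0 < L := by linarith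
  rw [logveeZ_eq_log_div hL0]
  exact log_le_log (by positivity) ((le_div_iff₀ hL0).2 (mul_le_veeZ z L))

lemma logveeZ_pos {L : ℝ} (hL : 1 ≤ L) (z : Fin d → ℤ) : 0 < logveeZ z L :=
  log_pi_div_two_pos.trans_le (log_pi_div_two_le_logveeZ hL z)

/-- Doubling `⟨·⟩_L` adds `log 2 ≤ 2 log (π / 2)` to the logarithm, which is at least
`log (π / 2)`. -/
lemma logveeZ_le_three_mul {L : ℝ} (hL : 1 ≤ L) {x y : Fin d → ℤ}
    (h : veeZ x L ≤ 2 * veeZ y L) : logveeZ x L ≤ 3 * logveeZ y L := by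
  have hL0 : 0 < L := by linarith
  have hshift : logveeZ x L ≤ logveeZ y L + log 2 := by
    rw [logveeZ_eq_log_div hL0, logveeZ_eq_log_div hL0,
      ← log_mul (div_pos (veeZ_pos hL0 y) hL0).ne' two_ne_zero]
    refine log_le_log (div_pos (veeZ_pos hL0 x) hL0) ?_
    rw [div_mul_eq_mul_div, mul_comm]
    gcongr
  have hlog2 : log 2 ≤ 2 * log (π / 2) := by
    rw [← log_rpow (by positivity)]
    refine log_le_log two_pos ?_
    norm_num
    nlinarith [pi_gt_three]
  linarith [log_pi_div_two_le_logveeZ hL y]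

lemma logveeZ_le_two_mul {L : ℝ} (hL : 1 ≤ L) {x y : Fin d → ℤ}
    (h : veeZ x L * L ≤ veeZ y L ^ 2) : logveeZ x L ≤ 2 * logveeZ y L := by
  have hL0 : 0 < L := by linarith
  rw [logveeZ_eq_log_div hL0, logveeZ_eq_log_div hL0, ← Nat.cast_ofNat, ← log_pow]
  refine log_le_log (div_pos (veeZ_pos hL0 x) hL0) ?_
  rw [div_pow, div_le_div_iff₀ hL0 (by positivity)]
  nlinarith

lemma exists_log_rpow_le_rpow {p β : ℝ} (hp : 0 ≤ p) (hβ : 0 < β) :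
    ∃ C > 0, ∀ t : ℝ, 1 ≤ t → log t ^ p ≤ C * t ^ β := by
  set δ := β / (p + 1)
  have hδ : 0 < δ := by positivity
  refine ⟨(δ ^ p)⁻¹, by positivity, fun t ht => ?_⟩
  have ht0 : 0 ≤ t := by linarith
  have hδp : δ * p ≤ β := by
    rw [div_mul_eq_mul_div, div_le_iff₀ (by linarith)]
    nlinarith
  calc log t ^ p ≤ (t ^ δ / δ) ^ p := rpow_le_rpow (log_nonneg ht) (log_le_rpow_div ht0 hδ) hp
    _ = (δ ^ p)⁻¹ * t ^ (δ * p) := by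
        rw [div_rpow (by positivity) hδ.le, ← rpow_mul ht0]; ring
    _ ≤ (δ ^ p)⁻¹ * t ^ β := by gcongr

noncomputable def logWeight (a b L : ℝ) (z : Fin d → ℤ) : ℝ :=
  veeZ z L ^ (-a) / logveeZ z L ^ b

lemma logWeight_nonneg {L : ℝ} (hL : 1 ≤ L) (a b : ℝ) (z : Fin d → ℤ) :
    0 ≤ logWeight a b L z :=
  div_nonneg (rpow_nonneg (veeZ_pos (by linarith) z).le _)
    (rpow_nonneg (logveeZ_pos hL z).le _)

lemma logWeight_le {a b L u : ℝ} (hL : 0 < L) (hb : 0 ≤ b) (hu : 0 < u) {z : Fin d → ℤ}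
    (h : u ≤ logveeZ z L) : logWeight a b L z ≤ veeZ z L ^ (-a) / u ^ b :=
  div_le_div_of_nonneg_left (rpow_nonneg (veeZ_pos hL z).le _) (rpow_pos_of_pos hu b)
    (rpow_le_rpow hu.le h hb)

lemma rpow_neg_le_of_le_two_mul {a u v : ℝ} (ha : 0 ≤ a) (hu : 0 < u) (h : u ≤ 2 * v) :
    v ^ (-a) ≤ 2 ^ a * u ^ (-a) := by
  calc v ^ (-a) ≤ (u / 2) ^ (-a) :=
        rpow_le_rpow_of_nonpos (by positivity) (by linarith) (by linarith)
    _ = 2 ^ a * u ^ (-a) := by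
        rw [div_rpow hu.le zero_le_two, rpow_neg zero_le_two, div_inv_eq_mul, mul_comm]

lemma logWeight_le_of_le_two_mul {a b L : ℝ} (ha : 0 ≤ a) (hb : 0 ≤ b) (hL : 1 ≤ L)
    {x y : Fin d → ℤ} (h : veeZ x L ≤ 2 * veeZ y L) :
    logWeight a b L y ≤ 2 ^ a * 3 ^ b * logWeight a b L x := by
  have hL0 : 0 < L := by linarith
  have hℓ := logveeZ_pos hL x
  calc logWeight a b L y ≤ veeZ y L ^ (-a) / (logveeZ x L / 3) ^ b :=
        logWeight_le hL0 hb (by positivity) (by linarith [logveeZ_le_three_mul hL h])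
    _ ≤ 2 ^ a * veeZ x L ^ (-a) / (logveeZ x L / 3) ^ b := by
        gcongr
        exact rpow_neg_le_of_le_two_mul ha (veeZ_pos hL0 x) h
    _ = 2 ^ a * 3 ^ b * logWeight a b L x := by
        rw [logWeight, div_rpow hℓ.le zero_le_three]
        field_simp

/-- Split the ball at `⟨y⟩_L ^ 2 = ⟨x⟩_L · (π / 2) L`: outside, `log⟨y/L⟩₁ ≥ log⟨x/L⟩₁ / 2`;
inside, the ball is so small that the saving `((π / 2) L / ⟨x⟩_L) ^ ((d - c) / 2)` beats any power
of the log. -/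
lemma exists_sum_logWeight_le {c b : ℝ} (hc : 0 ≤ c) (hcd : c < d) (hb : 0 ≤ b) :
    ∃ C > 0, ∀ L : ℝ, 1 ≤ L → ∀ (x : Fin d → ℤ) (s : Finset (Fin d → ℤ)),
      (∀ y ∈ s, veeZ y L ≤ veeZ x L) →
      ∑ y ∈ s, logWeight c b L y ≤ C * veeZ x L ^ ((d : ℝ) - c) / logveeZ x L ^ b := by
  set e := (d : ℝ) - c
  obtain ⟨C₁, hC₁, H₁⟩ := exists_sum_veeZ_rpow_neg_le_of_lt hc hcd
  obtain ⟨C₂, hC₂, H₂⟩ := exists_log_rpow_le_rpow hb (β := e / 2) (by simp only [e]; linarith)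
  have hc₀ := log_pi_div_two_pos
  refine ⟨C₁ * (2 ^ b + C₂ * (π / 2) ^ (e / 2) / log (π / 2) ^ b), by positivity, ?_⟩
  intro L hL x s hs
  have hL0 : 0 < L := by linarith
  set V := veeZ x L
  set ℓ := logveeZ x L
  have hV : π / 2 * L ≤ V := mul_le_veeZ x L
  have hV0 : 0 < V := veeZ_pos hL0 x
  have hℓ : 0 < ℓ := logveeZ_pos hL x
  have hpi := one_lt_pi_div_two
  set R := √(V * (π / 2 * L)) with hR_def
  have hR : π / 2 * L ≤ R := (le_sqrt' (by positivity)).2 (by rw [sq]; gcongr)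
  have hRℓ : R ^ e * ℓ ^ b ≤ C₂ * (π / 2) ^ (e / 2) * V ^ e := by
    calc R ^ e * ℓ ^ b ≤ R ^ e * (C₂ * (V / L) ^ (e / 2)) := by
          gcongr
          have := H₂ (V / L) ((one_le_div hL0).2 (by nlinarith))
          rwa [← logveeZ_eq_log_div hL0 x] at this
      _ = C₂ * (V * (π / 2 * L) * (V / L)) ^ (e / 2) := by
          rw [hR_def, sqrt_eq_rpow, ← rpow_mul (by positivity), one_div_mul_eq_div,
            mul_rpow (x := V * (π / 2 * L)) (y := V / L) (by positivity) (by positivity)]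
          ring
      _ = C₂ * (π / 2 * V ^ 2) ^ (e / 2) := by
          congr 2
          field_simp
      _ = C₂ * (π / 2) ^ (e / 2) * V ^ e := by
          rw [mul_rpow (by positivity) (by positivity), ← rpow_natCast, ← rpow_mul hV0.le]
          push_cast
          ring_nf
  have hnear : ∑ y ∈ s with V * (π / 2 * L) ≤ veeZ y L ^ 2, logWeight c b L y ≤
      C₁ * 2 ^ b * V ^ e / ℓ ^ b := by
    calc _ ≤ ∑ y ∈ s with V * (π / 2 * L) ≤ veeZ y L ^ 2, veeZ y L ^ (-c) / (ℓ / 2) ^ b :=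
          sum_le_sum fun y hy => logWeight_le hL0 hb (by positivity) <| by
            have := logveeZ_le_two_mul hL (x := x) (y := y) (by nlinarith [(mem_filter.1 hy).2])
            linarith
      _ = 2 ^ b / ℓ ^ b * ∑ y ∈ s with V * (π / 2 * L) ≤ veeZ y L ^ 2, veeZ y L ^ (-c) := by
          rw [mul_sum, div_rpow hℓ.le zero_le_two]
          refine sum_congr rfl fun y _ => ?_
          field_simp
      _ ≤ 2 ^ b / ℓ ^ b * (C₁ * V ^ e) := by
          gcongr
          exact H₁ L V hL hV _ fun y hy => hs y (mem_filter.1 hy).1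
      _ = C₁ * 2 ^ b * V ^ e / ℓ ^ b := by ring
  have hfar : ∑ y ∈ s with ¬ V * (π / 2 * L) ≤ veeZ y L ^ 2, logWeight c b L y ≤
      C₁ * (C₂ * (π / 2) ^ (e / 2) / log (π / 2) ^ b) * V ^ e / ℓ ^ b := by
    calc _ ≤ ∑ y ∈ s with ¬ V * (π / 2 * L) ≤ veeZ y L ^ 2, veeZ y L ^ (-c) / log (π / 2) ^ b :=
          sum_le_sum fun y _ => logWeight_le hL0 hb hc₀ (log_pi_div_two_le_logveeZ hL y)
      _ = (∑ y ∈ s with ¬ V * (π / 2 * L) ≤ veeZ y L ^ 2, veeZ y L ^ (-c)) / log (π / 2) ^ b := by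
          rw [sum_div]
      _ ≤ C₁ * R ^ e / log (π / 2) ^ b := by
          gcongr
          exact H₁ L R hL hR _ fun y hy =>
            (le_sqrt' (veeZ_pos hL0 y)).2 (not_le.1 (mem_filter.1 hy).2).le
      _ ≤ C₁ * (C₂ * (π / 2) ^ (e / 2) / log (π / 2) ^ b) * V ^ e / ℓ ^ b := by
          rw [le_div_iff₀ (by positivity)]
          calc C₁ * R ^ e / log (π / 2) ^ b * ℓ ^ b
              = C₁ / log (π / 2) ^ b * (R ^ e * ℓ ^ b) := by ring
            _ ≤ C₁ / log (π / 2) ^ b * (C₂ * (π / 2) ^ (e / 2) * V ^ e) := by gcongr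
            _ = _ := by ring
  rw [← sum_filter_add_sum_filter_not s (fun y => V * (π / 2 * L) ≤ veeZ y L ^ 2)]
  calc _ ≤ C₁ * 2 ^ b * V ^ e / ℓ ^ b +
        C₁ * (C₂ * (π / 2) ^ (e / 2) / log (π / 2) ^ b) * V ^ e / ℓ ^ b := add_le_add hnear hfar
    _ = _ := by ring

lemma rpow_neg_mul_rpow_neg_le_add {u v a b : ℝ} (hu : 0 < u) (hv : 0 < v) (ha : 0 ≤ a)
    (hb : 0 ≤ b) : u ^ (-a) * v ^ (-b) ≤ u ^ (-(a + b)) + v ^ (-(a + b)) := by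
  rw [neg_add, rpow_add hu, rpow_add hv]
  rcases le_total u v with huv | hvu
  · have : v ^ (-b) ≤ u ^ (-b) := rpow_le_rpow_of_nonpos hu huv (by linarith)
    nlinarith [rpow_pos_of_pos hu (-a), rpow_pos_of_pos hv (-a), rpow_pos_of_pos hv (-b)]
  · have : u ^ (-a) ≤ v ^ (-a) := rpow_le_rpow_of_nonpos hv hvu (by linarith)
    nlinarith [rpow_pos_of_pos hu (-b), rpow_pos_of_pos hv (-b), rpow_pos_of_pos hu (-a)]

lemma sum_sub_eq_sum_image (x : Fin d → ℤ) (s : Finset (Fin d → ℤ)) (f : (Fin d → ℤ) → ℝ) :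
    ∑ y ∈ s, f (x - y) = ∑ z ∈ s.image (x - ·), f z :=
  (sum_image fun _ _ _ _ h => sub_right_injective h).symm

variable {a₁ a₂ b₁ b₂ : ℝ}

lemma exists_sum_conv_le_of_near_x (ha₁ : 0 ≤ a₁) (ha₁d : a₁ < d) (ha₂ : 0 ≤ a₂) (hb₁ : 0 ≤ b₁)
    (hb₂ : 0 ≤ b₂) :
    ∃ C > 0, ∀ L : ℝ, 1 ≤ L → ∀ (x : Fin d → ℤ) (s : Finset (Fin d → ℤ)),
      (∀ y ∈ s, veeZ (x - y) L ≤ veeZ x L ∧ veeZ x L ≤ 2 * veeZ y L) →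
      ∑ y ∈ s, logWeight a₁ a₂ L (x - y) * logWeight b₁ b₂ L y ≤
        C * veeZ x L ^ ((d : ℝ) - a₁ - b₁) / logveeZ x L ^ b₂ := by
  obtain ⟨C, hC, H⟩ := exists_sum_veeZ_rpow_neg_le_of_lt ha₁ ha₁d
  have hc₀ := log_pi_div_two_pos
  refine ⟨2 ^ b₁ * 3 ^ b₂ / log (π / 2) ^ a₂ * C, by positivity, ?_⟩
  intro L hL x s hs
  have hL0 : 0 < L := by linarith
  have hV0 := veeZ_pos hL0 x
  set K := 2 ^ b₁ * 3 ^ b₂ * logWeight b₁ b₂ L x with hK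
  calc ∑ y ∈ s, logWeight a₁ a₂ L (x - y) * logWeight b₁ b₂ L y
      ≤ ∑ y ∈ s, veeZ (x - y) L ^ (-a₁) / log (π / 2) ^ a₂ * K :=
        sum_le_sum fun y hy => mul_le_mul_of_nonneg'
          (logWeight_le hL0 ha₂ hc₀ (log_pi_div_two_le_logveeZ hL _))
          (logWeight_le_of_le_two_mul hb₁ hb₂ hL (hs y hy).2)
          (logWeight_nonneg hL _ _ _)
          (div_nonneg (rpow_nonneg (veeZ_pos hL0 _).le _) (by positivity))
    _ = K / log (π / 2) ^ a₂ * ∑ z ∈ s.image (x - ·), veeZ z L ^ (-a₁) := by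
        rw [← sum_sub_eq_sum_image, mul_sum]
        exact sum_congr rfl fun y _ => by ring
    _ ≤ K / log (π / 2) ^ a₂ * (C * veeZ x L ^ ((d : ℝ) - a₁)) := by
        have : 0 ≤ K := by have := logWeight_nonneg hL b₁ b₂ x; positivity
        gcongr
        refine H L _ hL (mul_le_veeZ x L) _ fun z hz => ?_
        obtain ⟨y, hy, rfl⟩ := mem_image.1 hz
        exact (hs y hy).1
    _ = 2 ^ b₁ * 3 ^ b₂ / log (π / 2) ^ a₂ * C * veeZ x L ^ ((d : ℝ) - a₁ - b₁) /
          logveeZ x L ^ b₂ := by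
        rw [hK, logWeight, show (d : ℝ) - a₁ - b₁ = -b₁ + (d - a₁) by ring, rpow_add hV0]
        ring

lemma exists_sum_conv_le_of_near_zero (ha₁ : 0 ≤ a₁) (ha₂ : 0 ≤ a₂) (hb₁ : 0 ≤ b₁)
    (hb₁d : b₁ < d) (hb₂ : 0 ≤ b₂) :
    ∃ C > 0, ∀ L : ℝ, 1 ≤ L → ∀ (x : Fin d → ℤ) (s : Finset (Fin d → ℤ)),
      (∀ y ∈ s, veeZ y L ≤ veeZ x L ∧ veeZ x L ≤ 2 * veeZ (x - y) L) →
      ∑ y ∈ s, logWeight a₁ a₂ L (x - y) * logWeight b₁ b₂ L y ≤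
        C * veeZ x L ^ ((d : ℝ) - a₁ - b₁) / logveeZ x L ^ b₂ := by
  obtain ⟨C, hC, H⟩ := exists_sum_logWeight_le hb₁ hb₁d hb₂
  have hc₀ := log_pi_div_two_pos
  refine ⟨2 ^ a₁ / log (π / 2) ^ a₂ * C, by positivity, ?_⟩
  intro L hL x s hs
  have hL0 : 0 < L := by linarith
  have hV0 := veeZ_pos hL0 x
  set K := 2 ^ a₁ * veeZ x L ^ (-a₁) / log (π / 2) ^ a₂
  calc ∑ y ∈ s, logWeight a₁ a₂ L (x - y) * logWeight b₁ b₂ L y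
      ≤ ∑ y ∈ s, K * logWeight b₁ b₂ L y := by
        refine sum_le_sum fun y hy => mul_le_mul_of_nonneg_right ?_ (logWeight_nonneg hL _ _ _)
        calc logWeight a₁ a₂ L (x - y) ≤ veeZ (x - y) L ^ (-a₁) / log (π / 2) ^ a₂ :=
              logWeight_le hL0 ha₂ hc₀ (log_pi_div_two_le_logveeZ hL _)
          _ ≤ K := div_le_div_of_nonneg_right (rpow_neg_le_of_le_two_mul ha₁ hV0 (hs y hy).2)
              (by positivity)
    _ = K * ∑ y ∈ s, logWeight b₁ b₂ L y := (mul_sum _ _ _).symm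
    _ ≤ K * (C * veeZ x L ^ ((d : ℝ) - b₁) / logveeZ x L ^ b₂) := by
        gcongr
        exact H L hL x s fun y hy => (hs y hy).1
    _ = 2 ^ a₁ / log (π / 2) ^ a₂ * C * veeZ x L ^ ((d : ℝ) - a₁ - b₁) / logveeZ x L ^ b₂ := by
        rw [show (d : ℝ) - a₁ - b₁ = -a₁ + (d - b₁) by ring, rpow_add hV0]
        ring

lemma exists_sum_conv_le_of_far (ha₁ : 0 ≤ a₁) (ha₂ : 0 ≤ a₂) (hb₁ : 0 ≤ b₁) (hb₂ : 0 ≤ b₂)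
    (hsum : d < a₁ + b₁) :
    ∃ C > 0, ∀ L : ℝ, 1 ≤ L → ∀ (x : Fin d → ℤ) (s : Finset (Fin d → ℤ)),
      (∀ y ∈ s, veeZ x L ≤ 2 * veeZ y L ∧ veeZ x L ≤ 2 * veeZ (x - y) L) →
      ∑ y ∈ s, logWeight a₁ a₂ L (x - y) * logWeight b₁ b₂ L y ≤
        C * veeZ x L ^ ((d : ℝ) - a₁ - b₁) / logveeZ x L ^ b₂ := by
  obtain ⟨C, hC, H⟩ := exists_sum_veeZ_rpow_neg_le_of_gt hsum
  have hc₀ := log_pi_div_two_pos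
  refine ⟨2 * C * 2 ^ (a₁ + b₁ - d) * 3 ^ b₂ / log (π / 2) ^ a₂, by positivity, ?_⟩
  intro L hL x s hs
  have hL0 : 0 < L := by linarith
  have hV0 := veeZ_pos hL0 x
  have hℓ := logveeZ_pos hL x
  set K := 3 ^ b₂ / (log (π / 2) ^ a₂ * logveeZ x L ^ b₂) with hK
  have hpt : ∀ y ∈ s, logWeight a₁ a₂ L (x - y) * logWeight b₁ b₂ L y ≤
      K * (veeZ (x - y) L ^ (-(a₁ + b₁)) + veeZ y L ^ (-(a₁ + b₁))) := fun y hy =>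
    calc logWeight a₁ a₂ L (x - y) * logWeight b₁ b₂ L y
        ≤ veeZ (x - y) L ^ (-a₁) / log (π / 2) ^ a₂ *
            (veeZ y L ^ (-b₁) / (logveeZ x L / 3) ^ b₂) :=
          mul_le_mul_of_nonneg' (logWeight_le hL0 ha₂ hc₀ (log_pi_div_two_le_logveeZ hL _))
            (logWeight_le hL0 hb₂ (by positivity)
              (by linarith [logveeZ_le_three_mul hL (hs y hy).1]))
            (logWeight_nonneg hL _ _ _)
            (div_nonneg (rpow_nonneg (veeZ_pos hL0 _).le _) (by positivity))
      _ = K * (veeZ (x - y) L ^ (-a₁) * veeZ y L ^ (-b₁)) := by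
          rw [div_rpow hℓ.le zero_le_three, hK]
          field_simp
      _ ≤ K * (veeZ (x - y) L ^ (-(a₁ + b₁)) + veeZ y L ^ (-(a₁ + b₁))) := by
          gcongr
          exact rpow_neg_mul_rpow_neg_le_add (veeZ_pos hL0 _) (veeZ_pos hL0 _) ha₁ hb₁
  have htail : ∀ s' : Finset (Fin d → ℤ), (∀ z ∈ s', veeZ x L / 2 ≤ veeZ z L) →
      ∑ z ∈ s', veeZ z L ^ (-(a₁ + b₁)) ≤
        C * 2 ^ (a₁ + b₁ - d) * veeZ x L ^ ((d : ℝ) - a₁ - b₁) := by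
    intro s' hs'
    calc _ ≤ C * (veeZ x L / 2) ^ ((d : ℝ) - (a₁ + b₁)) := H L _ hL (by positivity) s' hs'
      _ = _ := by
          rw [div_rpow hV0.le zero_le_two, show (d : ℝ) - (a₁ + b₁) = -(a₁ + b₁ - d) by ring,
            rpow_neg zero_le_two, div_inv_eq_mul]
          ring_nf
  calc ∑ y ∈ s, logWeight a₁ a₂ L (x - y) * logWeight b₁ b₂ L y
      ≤ K * (∑ z ∈ s.image (x - ·), veeZ z L ^ (-(a₁ + b₁)) +
          ∑ y ∈ s, veeZ y L ^ (-(a₁ + b₁))) := by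
        rw [← sum_sub_eq_sum_image, ← sum_add_distrib, mul_sum]
        exact sum_le_sum hpt
    _ ≤ K * (C * 2 ^ (a₁ + b₁ - d) * veeZ x L ^ ((d : ℝ) - a₁ - b₁) +
          C * 2 ^ (a₁ + b₁ - d) * veeZ x L ^ ((d : ℝ) - a₁ - b₁)) := by
        gcongr
        · refine htail _ fun z hz => ?_
          obtain ⟨y, hy, rfl⟩ := mem_image.1 hz
          linarith [(hs y hy).2]
        · exact htail s fun y hy => by linarith [(hs y hy).1]
    _ = _ := by ring

lemma exists_sum_conv_le (ha₁ : 0 ≤ a₁) (ha₁d : a₁ < d) (ha₂ : 0 ≤ a₂) (hb₁ : 0 ≤ b₁)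
    (hb₁d : b₁ < d) (hb₂ : 0 ≤ b₂) (hsum : d < a₁ + b₁) :
    ∃ C > 0, ∀ L : ℝ, 1 ≤ L → ∀ (x : Fin d → ℤ) (s : Finset (Fin d → ℤ)),
      ∑ y ∈ s, logWeight a₁ a₂ L (x - y) * logWeight b₁ b₂ L y ≤
        C * veeZ x L ^ ((d : ℝ) - a₁ - b₁) / logveeZ x L ^ b₂ := by
  classical
  obtain ⟨C₁, hC₁, H₁⟩ := exists_sum_conv_le_of_near_x ha₁ ha₁d ha₂ hb₁ hb₂
  obtain ⟨C₂, hC₂, H₂⟩ := exists_sum_conv_le_of_near_zero ha₁ ha₂ hb₁ hb₁d hb₂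
  obtain ⟨C₃, hC₃, H₃⟩ := exists_sum_conv_le_of_far ha₁ ha₂ hb₁ hb₂ hsum
  refine ⟨C₁ + C₂ + C₃, by positivity, fun L hL x s => ?_⟩
  have hT : ∀ y ∈ s, 0 ≤ logWeight a₁ a₂ L (x - y) * logWeight b₁ b₂ L y := fun y _ =>
    mul_nonneg (logWeight_nonneg hL _ _ _) (logWeight_nonneg hL _ _ _)
  rw [add_mul, add_mul, add_div, add_div, add_assoc]
  refine (sum_le_sum_filter_add_sum_filter hT fun y _ => veeZ_trichotomy x y L).trans
    (add_le_add (H₁ L hL x _ fun y hy => (mem_filter.1 hy).2) ?_)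
  exact (sum_le_sum_filter_add_sum_filter (fun y hy => hT y (mem_filter.1 hy).1)
    fun y hy => (mem_filter.1 hy).2).trans
    (add_le_add (H₂ L hL x _ fun y hy => (mem_filter.1 hy).2)
      (H₃ L hL x _ fun y hy => (mem_filter.1 hy).2))

end

theorem conv_bound_case_c_general (d : ℕ) (a₁ a₂ b₁ b₂ : ℝ)
    (ha₁ : a₁ < (d : ℝ)) (ha₂ : 0 ≤ a₂) (hb₁ : 0 < b₁) (hb₁' : b₁ ≤ a₁)
    (hb₂ : 0 ≤ b₂) (hsum : (d : ℝ) < a₁ + b₁) :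
    ∃ C : ℝ, 0 < C ∧ ∀ L : ℝ, 1 ≤ L → ∀ x : Fin d → ℤ,
      (∑' y : Fin d → ℤ,
        (veeZ (x - y) L ^ (-a₁) / (logveeZ (x - y) L) ^ a₂) *
        (veeZ y L ^ (-b₁) / (logveeZ y L) ^ b₂))
      ≤ C * veeZ x L ^ ((d : ℝ) - a₁ - b₁) / (logveeZ x L) ^ b₂ := by
  obtain ⟨C, hC, H⟩ := exists_sum_conv_le (hb₁.le.trans hb₁') ha₁ ha₂ hb₁.le (hb₁'.trans_lt ha₁)
    hb₂ hsum
  refine ⟨C, hC, fun L hL x => Real.tsum_le_of_sum_le (fun y => ?_) (H L hL x)⟩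
  exact mul_nonneg (logWeight_nonneg hL _ _ _) (logWeight_nonneg hL _ _ _)

theorem conv_bound_case_c (d : ℕ) (a₁ a₂ b₁ b₂ : ℝ)
    (ha₁ : a₁ < (d : ℝ)) (ha₂ : 0 ≤ a₂) (hb₁ : 0 < b₁) (hb₁' : b₁ ≤ a₁)
    (hb₂ : 0 ≤ b₂) (hsum : (d : ℝ) < a₁ + b₁) (hab' : a₁ = b₁ → b₂ ≤ a₂) :
    ∃ C : ℝ, 0 < C ∧ ∀ L : ℝ, 1 ≤ L → ∀ x : Fin d → ℤ,
      (∑' y : Fin d → ℤ,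
        (veeZ (x - y) L ^ (-a₁) / (logveeZ (x - y) L) ^ a₂) *
        (veeZ y L ^ (-b₁) / (logveeZ y L) ^ b₂))
      ≤ C * veeZ x L ^ ((d : ℝ) - a₁ - b₁) / (logveeZ x L) ^ b₂ :=
  conv_bound_case_c_general d a₁ a₂ b₁ b₂ ha₁ ha₂ hb₁ hb₁' hb₂ hsum
end

section
/- For x, y ∈ ℝ^d with x ≠ 0 and |y| ≤ |x|/3, and for d ≥ 3, there is a constant C = C(d) such that |½(|x+y|^{2−d}/log|x+y| + |x−y|^{2−d}/log|x−y|) − |x|^{2−d}/log|x|| ≤ C |y|² |x|^{−d}/log|x|, provided |x| ≥ e. -/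
/-! Write `‖z‖ ^ a / log ‖z‖ = 2 F (‖z‖ ^ 2)` with `F s = s ^ (a / 2) / log s` and put
`g t = F (‖x + t • y‖ ^ 2)`, which is smooth in `t` because `‖x + t • y‖ ^ 2` is a quadratic
polynomial in `t`. The quantity to bound is half the symmetric second difference
`g 1 + g (-1) - 2 g 0`, which is at most twice the supremum of `|g''|` on `[-1, 1]`.
On that interval `‖x + t • y‖ ≥ 2 ‖x‖ / 3`, so the explicit formulas for `F'` and `F''`, valid
where `log s ≥ 1`, bound `|g''|` by a multiple of `‖y‖ ^ 2 ‖x‖ ^ (a - 2) / log ‖x‖`. -/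

open Real Set
open scoped InnerProductSpace

noncomputable def powDivLog (b s : ℝ) : ℝ := s ^ b / log s

noncomputable def powDivLogDeriv (b s : ℝ) : ℝ := (b * log s - 1) * s ^ (b - 1) / log s ^ 2

noncomputable def powDivLogDeriv2 (b s : ℝ) : ℝ :=
  (b * (b - 1) * log s ^ 2 + (1 - 2 * b) * log s + 2) * s ^ (b - 2) / log s ^ 3

theorem hasDerivAt_powDivLog (b : ℝ) {s : ℝ} (hs : log s ≠ 0) :
    HasDerivAt (powDivLog b) (powDivLogDeriv b s) s := by
  have hs0 : s ≠ 0 := by rintro rfl; exact hs log_zero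
  refine ((hasDerivAt_rpow_const (Or.inl hs0)).div (hasDerivAt_log hs0) hs).congr_deriv ?_
  rw [powDivLogDeriv, rpow_sub_one hs0]
  field_simp

theorem hasDerivAt_powDivLogDeriv (b : ℝ) {s : ℝ} (hs : log s ≠ 0) :
    HasDerivAt (powDivLogDeriv b) (powDivLogDeriv2 b s) s := by
  have hs0 : s ≠ 0 := by rintro rfl; exact hs log_zero
  have hnum : HasDerivAt (fun x => (b * log x - 1) * x ^ (b - 1))
      (b * s⁻¹ * s ^ (b - 1) + (b * log s - 1) * ((b - 1) * s ^ (b - 1 - 1))) s :=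
    (((hasDerivAt_log hs0).const_mul b).sub_const 1).mul (hasDerivAt_rpow_const (Or.inl hs0))
  have hden : HasDerivAt (fun x => log x ^ 2) (2 * log s ^ (2 - 1) * s⁻¹) s :=
    (hasDerivAt_log hs0).pow 2
  refine (hnum.div hden (pow_ne_zero 2 hs)).congr_deriv ?_
  rw [powDivLogDeriv2, show b - 2 = b - 1 - 1 by ring]
  simp only [rpow_sub_one hs0]
  field_simp
  ring

theorem abs_powDivLogDeriv_le (b : ℝ) {s : ℝ} (hs : 0 < s) (hlog : 1 ≤ log s) :
    |powDivLogDeriv b s| ≤ (|b| + 1) * s ^ (b - 1) / log s := by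
  have hL : 0 < log s := one_pos.trans_le hlog
  have hnum : |b * log s - 1| ≤ (|b| + 1) * log s := by
    rw [abs_le]; constructor <;> nlinarith [neg_abs_le b, le_abs_self b]
  rw [powDivLogDeriv, abs_div, abs_mul, abs_of_pos (rpow_pos_of_pos hs _),
    abs_of_pos (by positivity : 0 < log s ^ 2)]
  calc _ ≤ (|b| + 1) * log s * s ^ (b - 1) / log s ^ 2 := by gcongr
    _ = (|b| + 1) * s ^ (b - 1) / log s := by field_simp

theorem abs_powDivLogDeriv2_le (b : ℝ) {s : ℝ} (hs : 0 < s) (hlog : 1 ≤ log s) :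
    |powDivLogDeriv2 b s| ≤ (|b| + 2) ^ 2 * s ^ (b - 2) / log s := by
  have hL : 0 < log s := one_pos.trans_le hlog
  have hnum :
      |b * (b - 1) * log s ^ 2 + (1 - 2 * b) * log s + 2| ≤ (|b| + 2) ^ 2 * log s ^ 2 := by
    have hL2 : log s ≤ log s ^ 2 := by nlinarith
    have hL1 : 1 ≤ log s ^ 2 := by nlinarith
    rw [abs_le]
    have hbL := mul_nonneg (sq_nonneg b) (sq_nonneg (log s))
    rcases le_total 0 b with hb | hb
    · rw [abs_of_nonneg hb]
      constructor <;> nlinarith [mul_nonneg hb (sub_nonneg.2 hL2), mul_nonneg hb hL.le]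
    · rw [abs_of_nonpos hb]
      have hb' := neg_nonneg.2 hb
      constructor <;> nlinarith [mul_nonneg hb' (sub_nonneg.2 hL2), mul_nonneg hb' hL.le]
  rw [powDivLogDeriv2, abs_div, abs_mul, abs_of_pos (rpow_pos_of_pos hs _),
    abs_of_pos (by positivity : 0 < log s ^ 3)]
  calc _ ≤ (|b| + 2) ^ 2 * log s ^ 2 * s ^ (b - 2) / log s ^ 3 := by gcongr
    _ = (|b| + 2) ^ 2 * s ^ (b - 2) / log s := by field_simp

theorem abs_symm_second_diff_le {g g' g'' : ℝ → ℝ} {M r : ℝ} (hr : 0 ≤ r)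
    (hg : ∀ t ∈ Icc (-r) r, HasDerivAt g (g' t) t)
    (hg' : ∀ t ∈ Icc (-r) r, HasDerivAt g' (g'' t) t)
    (hM : ∀ t ∈ Icc (-r) r, |g'' t| ≤ M) :
    |g r + g (-r) - 2 * g 0| ≤ 2 * M * r ^ 2 := by
  have hM0 : 0 ≤ M := (abs_nonneg _).trans (hM 0 ⟨by linarith, hr⟩)
  have hlip : ∀ s ∈ Icc (-r) r, ∀ t ∈ Icc (-r) r, |g' t - g' s| ≤ M * |t - s| :=
    fun s hs t ht => (convex_Icc (-r) r).norm_image_sub_le_of_norm_hasDerivWithin_le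
      (fun u hu => (hg' u hu).hasDerivWithinAt) hM hs ht
  have hmem : ∀ t ∈ Icc 0 r, t ∈ Icc (-r) r ∧ -t ∈ Icc (-r) r := fun t ht =>
    ⟨⟨by linarith [ht.1], ht.2⟩, ⟨by linarith [ht.2], by linarith [ht.1]⟩⟩
  have hsum : ∀ t ∈ Icc 0 r, HasDerivAt (fun u => g u + g (-u)) (g' t - g' (-t)) t := by
    intro t ht
    have hneg : HasDerivAt (fun u => g (-u)) (g' (-t) * -1) t :=
      (hg (-t) (hmem t ht).2).comp t (hasDerivAt_neg t)
    exact ((hg t (hmem t ht).1).add hneg).congr_deriv (by ring)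
  have hsum_le : ∀ t ∈ Icc 0 r, |g' t - g' (-t)| ≤ 2 * M * r := fun t ht =>
    calc |g' t - g' (-t)| ≤ M * |t - -t| := hlip _ (hmem t ht).2 _ (hmem t ht).1
      _ ≤ M * (2 * r) := by
        gcongr; rw [abs_le]; constructor <;> linarith [ht.1, ht.2]
      _ = 2 * M * r := by ring
  have := (convex_Icc 0 r).norm_image_sub_le_of_norm_hasDerivWithin_le
    (fun u hu => (hsum u hu).hasDerivWithinAt) hsum_le ⟨le_rfl, hr⟩ ⟨hr, le_rfl⟩
  simp only [neg_zero, sub_zero, Real.norm_eq_abs, abs_of_nonneg hr] at this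
  calc |g r + g (-r) - 2 * g 0| = |g r + g (-r) - (g 0 + g 0)| := by ring_nf
    _ ≤ 2 * M * r * r := this
    _ = 2 * M * r ^ 2 := by ring

theorem rpow_div_log_eq_two_mul_powDivLog (a : ℝ) {r : ℝ} (hr : 0 ≤ r) :
    r ^ a / log r = 2 * powDivLog (a / 2) (r ^ 2) := by
  rw [powDivLog, ← rpow_natCast_mul hr, log_pow]
  push_cast
  rw [mul_div_cancel₀ a two_ne_zero]
  ring

section InnerProductSpace

variable {E : Type*} [NormedAddCommGroup E] [InnerProductSpace ℝ E]

theorem hasDerivAt_norm_add_smul_sq (x y : E) (t : ℝ) :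
    HasDerivAt (fun t => ‖x + t • y‖ ^ 2) (2 * ⟪x + t • y, y⟫_ℝ) t := by
  simpa using (((hasDerivAt_id t).smul_const y).const_add x).norm_sq

theorem hasDerivAt_inner_add_smul (x y : E) (t : ℝ) :
    HasDerivAt (fun t => 2 * ⟪x + t • y, y⟫_ℝ) (2 * ‖y‖ ^ 2) t := by
  have hline := ((hasDerivAt_id t).smul_const y).const_add x
  simpa using (hline.inner ℝ (hasDerivAt_const t y)).const_mul 2

theorem four_ninths_mul_norm_sq_le_norm_add_smul_sq {x y : E} (hy : ‖y‖ ≤ ‖x‖ / 3) {t : ℝ}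
    (ht : |t| ≤ 1) : 4 / 9 * ‖x‖ ^ 2 ≤ ‖x + t • y‖ ^ 2 := by
  have hty : ‖t • y‖ ≤ ‖x‖ / 3 := by
    rw [norm_smul, norm_eq_abs]
    exact (mul_le_of_le_one_left (norm_nonneg y) ht).trans hy
  have htri : ‖x‖ ≤ ‖x + t • y‖ + ‖t • y‖ := by simpa using norm_sub_le (x + t • y) (t • y)
  nlinarith [norm_nonneg x]

theorem log_norm_le_log_norm_add_smul_sq {x y : E} (hx : exp 1 ≤ ‖x‖) (hy : ‖y‖ ≤ ‖x‖ / 3)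
    {t : ℝ} (ht : |t| ≤ 1) : log ‖x‖ ≤ log (‖x + t • y‖ ^ 2) := by
  have hx94 : 9 / 4 ≤ ‖x‖ := le_trans (by linarith [exp_one_gt_d9]) hx
  have hnear := four_ninths_mul_norm_sq_le_norm_add_smul_sq hy ht
  exact log_le_log (by linarith) (by nlinarith)

theorem hasDerivAt_powDivLog_norm_add_smul_sq (b : ℝ) (x y : E) {t : ℝ}
    (ht : log (‖x + t • y‖ ^ 2) ≠ 0) :
    HasDerivAt (fun t => powDivLog b (‖x + t • y‖ ^ 2))
      (powDivLogDeriv b (‖x + t • y‖ ^ 2) * (2 * ⟪x + t • y, y⟫_ℝ)) t :=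
  HasDerivAt.comp (h₂ := powDivLog b) t (hasDerivAt_powDivLog b ht)
    (hasDerivAt_norm_add_smul_sq x y t)

theorem hasDerivAt_powDivLogDeriv_norm_add_smul_sq (b : ℝ) (x y : E) {t : ℝ}
    (ht : log (‖x + t • y‖ ^ 2) ≠ 0) :
    HasDerivAt (fun t => powDivLogDeriv b (‖x + t • y‖ ^ 2) * (2 * ⟪x + t • y, y⟫_ℝ))
      (powDivLogDeriv2 b (‖x + t • y‖ ^ 2) * (2 * ⟪x + t • y, y⟫_ℝ) ^ 2
        + powDivLogDeriv b (‖x + t • y‖ ^ 2) * (2 * ‖y‖ ^ 2)) t := by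
  have hcomp : HasDerivAt (fun t => powDivLogDeriv b (‖x + t • y‖ ^ 2))
      (powDivLogDeriv2 b (‖x + t • y‖ ^ 2) * (2 * ⟪x + t • y, y⟫_ℝ)) t :=
    HasDerivAt.comp (h₂ := powDivLogDeriv b) t (hasDerivAt_powDivLogDeriv b ht)
      (hasDerivAt_norm_add_smul_sq x y t)
  exact (hcomp.mul (hasDerivAt_inner_add_smul x y t)).congr_deriv (by ring)

theorem abs_powDivLog_second_deriv_le (b : ℝ) {z : E} (y : E) (hz : 1 ≤ log (‖z‖ ^ 2)) :
    |powDivLogDeriv2 b (‖z‖ ^ 2) * (2 * ⟪z, y⟫_ℝ) ^ 2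
        + powDivLogDeriv b (‖z‖ ^ 2) * (2 * ‖y‖ ^ 2)|
      ≤ 6 * (|b| + 2) ^ 2 * (‖z‖ ^ 2) ^ (b - 1) * ‖y‖ ^ 2 / log (‖z‖ ^ 2) := by
  set s := ‖z‖ ^ 2
  have hL : 0 < log s := one_pos.trans_le hz
  have hs : 0 < s := lt_of_le_of_ne (by positivity) fun h => hL.ne' (by rw [← h, log_zero])
  have hq : (2 * ⟪z, y⟫_ℝ) ^ 2 ≤ 4 * s * ‖y‖ ^ 2 := by
    have := pow_le_pow_left₀ (abs_nonneg _) (abs_real_inner_le_norm z y) 2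
    rw [sq_abs] at this
    linarith
  have hpow : s ^ (b - 2) * s = s ^ (b - 1) := by
    rw [← rpow_add_one hs.ne']; ring_nf
  have hb : |b| + 1 ≤ (|b| + 2) ^ 2 := by nlinarith [abs_nonneg b]
  have hs1 : 0 ≤ s ^ (b - 1) := (rpow_pos_of_pos hs _).le
  calc _ ≤ |powDivLogDeriv2 b s| * (2 * ⟪z, y⟫_ℝ) ^ 2
        + |powDivLogDeriv b s| * (2 * ‖y‖ ^ 2) := by
        refine (abs_add_le _ _).trans_eq ?_
        rw [abs_mul, abs_mul, abs_of_nonneg (sq_nonneg (2 * ⟪z, y⟫_ℝ)),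
          abs_of_nonneg (by positivity : (0 : ℝ) ≤ 2 * ‖y‖ ^ 2)]
    _ ≤ (|b| + 2) ^ 2 * s ^ (b - 2) / log s * (4 * s * ‖y‖ ^ 2)
          + (|b| + 1) * s ^ (b - 1) / log s * (2 * ‖y‖ ^ 2) := by
        gcongr
        · exact abs_powDivLogDeriv2_le b hs hz
        · exact abs_powDivLogDeriv_le b hs hz
    _ = (4 * (|b| + 2) ^ 2 + 2 * (|b| + 1)) * s ^ (b - 1) * ‖y‖ ^ 2 / log s := by
        rw [← hpow]; ring
    _ ≤ 6 * (|b| + 2) ^ 2 * s ^ (b - 1) * ‖y‖ ^ 2 / log s := by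
        gcongr; linarith

theorem abs_powDivLog_symm_second_diff_le {b : ℝ} (hb : b ≤ 1) {x y : E} (hx : exp 1 ≤ ‖x‖)
    (hy : ‖y‖ ≤ ‖x‖ / 3) :
    |powDivLog b (‖x + y‖ ^ 2) + powDivLog b (‖x - y‖ ^ 2) - 2 * powDivLog b (‖x‖ ^ 2)|
      ≤ 12 * (|b| + 2) ^ 2 * (4 / 9) ^ (b - 1) * ‖y‖ ^ 2 * (‖x‖ ^ 2) ^ (b - 1) / log ‖x‖ := by
  have hx0 : 0 < ‖x‖ := (exp_pos 1).trans_le hx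
  have hlogx : 1 ≤ log ‖x‖ := (le_log_iff_exp_le hx0).2 hx
  have hnear : ∀ t ∈ Icc (-1 : ℝ) 1, 4 / 9 * ‖x‖ ^ 2 ≤ ‖x + t • y‖ ^ 2 := fun t ht =>
    four_ninths_mul_norm_sq_le_norm_add_smul_sq hy (abs_le.2 ht)
  have hlog : ∀ t ∈ Icc (-1 : ℝ) 1, log ‖x‖ ≤ log (‖x + t • y‖ ^ 2) := fun t ht =>
    log_norm_le_log_norm_add_smul_sq hx hy (abs_le.2 ht)
  set M := 6 * (|b| + 2) ^ 2 * (4 / 9) ^ (b - 1) * ‖y‖ ^ 2 * (‖x‖ ^ 2) ^ (b - 1) / log ‖x‖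
    with hM_def
  have hM : ∀ t ∈ Icc (-1 : ℝ) 1,
      |powDivLogDeriv2 b (‖x + t • y‖ ^ 2) * (2 * ⟪x + t • y, y⟫_ℝ) ^ 2
        + powDivLogDeriv b (‖x + t • y‖ ^ 2) * (2 * ‖y‖ ^ 2)| ≤ M := by
    intro t ht
    refine (abs_powDivLog_second_deriv_le b y (hlogx.trans (hlog t ht))).trans ?_
    have hp : (‖x + t • y‖ ^ 2) ^ (b - 1) ≤ (4 / 9) ^ (b - 1) * (‖x‖ ^ 2) ^ (b - 1) := by
      rw [← mul_rpow (by norm_num) (by positivity)]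
      exact rpow_le_rpow_of_nonpos (by positivity) (hnear t ht) (by linarith)
    calc _ ≤ 6 * (|b| + 2) ^ 2 * ((4 / 9) ^ (b - 1) * (‖x‖ ^ 2) ^ (b - 1)) * ‖y‖ ^ 2
          / log (‖x + t • y‖ ^ 2) := by
          have := hlog t ht
          gcongr
          linarith
      _ ≤ M := by
        rw [hM_def, ← mul_assoc, mul_right_comm _ ((‖x‖ ^ 2) ^ (b - 1))]
        exact div_le_div_of_nonneg_left (by positivity) (by linarith) (hlog t ht)
  have hlog_ne : ∀ t ∈ Icc (-1 : ℝ) 1, log (‖x + t • y‖ ^ 2) ≠ 0 := fun t ht =>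
    (one_pos.trans_le (hlogx.trans (hlog t ht))).ne'
  have hg := fun t (ht : t ∈ Icc (-1 : ℝ) 1) =>
    hasDerivAt_powDivLog_norm_add_smul_sq b x y (hlog_ne t ht)
  have hg' := fun t (ht : t ∈ Icc (-1 : ℝ) 1) =>
    hasDerivAt_powDivLogDeriv_norm_add_smul_sq b x y (hlog_ne t ht)
  have hsymm := abs_symm_second_diff_le zero_le_one hg hg' hM
  rw [show 12 * (|b| + 2) ^ 2 * (4 / 9) ^ (b - 1) * ‖y‖ ^ 2 * (‖x‖ ^ 2) ^ (b - 1) / log ‖x‖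
    = 2 * M * 1 ^ 2 by rw [hM_def]; ring]
  simpa [← sub_eq_add_neg] using hsymm

theorem abs_rpow_div_log_symm_second_diff_le {a : ℝ} (ha : a ≤ 2) {x y : E}
    (hx : exp 1 ≤ ‖x‖) (hy : ‖y‖ ≤ ‖x‖ / 3) :
    |1 / 2 * (‖x + y‖ ^ a / log ‖x + y‖ + ‖x - y‖ ^ a / log ‖x - y‖) - ‖x‖ ^ a / log ‖x‖|
      ≤ 12 * (|a / 2| + 2) ^ 2 * (4 / 9) ^ (a / 2 - 1) * ‖y‖ ^ 2 * ‖x‖ ^ (a - 2) / log ‖x‖ := by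
  have key := abs_powDivLog_symm_second_diff_le (b := a / 2) (by linarith) hx hy
  rw [← rpow_natCast_mul (norm_nonneg x), Nat.cast_ofNat, mul_sub,
    mul_div_cancel₀ a two_ne_zero, mul_one] at key
  simp only [rpow_div_log_eq_two_mul_powDivLog a (norm_nonneg _)]
  calc _ = |powDivLog (a / 2) (‖x + y‖ ^ 2) + powDivLog (a / 2) (‖x - y‖ ^ 2)
        - 2 * powDivLog (a / 2) (‖x‖ ^ 2)| := by ring_nf
    _ ≤ _ := key.trans_eq (by ring)

end InnerProductSpace

theorem taylor_symmetrized_log_general (d : ℕ) :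
    ∃ C : ℝ, 0 < C ∧ ∀ x y : EuclideanSpace ℝ (Fin d), x ≠ 0 →
      ‖y‖ ≤ ‖x‖ / 3 → Real.exp 1 ≤ ‖x‖ →
      |(1 / 2) * (‖x + y‖ ^ ((2 : ℝ) - d) / Real.log ‖x + y‖
          + ‖x - y‖ ^ ((2 : ℝ) - d) / Real.log ‖x - y‖)
        - ‖x‖ ^ ((2 : ℝ) - d) / Real.log ‖x‖|
      ≤ C * ‖y‖ ^ 2 * ‖x‖ ^ (-(d : ℝ)) / Real.log ‖x‖ := by
  refine ⟨12 * (|((2 : ℝ) - d) / 2| + 2) ^ 2 * (4 / 9) ^ (((2 : ℝ) - d) / 2 - 1), by positivity,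
    fun x y _ hy hx => ?_⟩
  have key := abs_rpow_div_log_symm_second_diff_le (a := 2 - d) (by simp) hx hy
  rwa [sub_sub_cancel_left] at key

theorem taylor_symmetrized_log (d : ℕ) (hd : 3 ≤ d) :
    ∃ C : ℝ, 0 < C ∧ ∀ x y : EuclideanSpace ℝ (Fin d), x ≠ 0 →
      ‖y‖ ≤ ‖x‖ / 3 → Real.exp 1 ≤ ‖x‖ →
      |(1 / 2) * (‖x + y‖ ^ ((2 : ℝ) - d) / Real.log ‖x + y‖
          + ‖x - y‖ ^ ((2 : ℝ) - d) / Real.log ‖x - y‖)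
        - ‖x‖ ^ ((2 : ℝ) - d) / Real.log ‖x‖|
      ≤ C * ‖y‖ ^ 2 * ‖x‖ ^ (-(d : ℝ)) / Real.log ‖x‖ :=
  taylor_symmetrized_log_general d
end

section
/- Let d > 2 and c > 0. For every integer n ≥ 2, ∫₀^{n^{-1/4}} r^{d-1} e^{-n r² log(π/(2r))} dr ≤ C (n log(πn/2))^{-d/2} for a constant C = C(d) < ∞. -/
/-!
On `(0, n^{-1/4})` we have `n r⁴ < 1 ≤ π³/8`, hence `π/(2r) ≥ (πn/2)^{1/4}` and
`log (π/(2r)) ≥ L/4` with `L = log (πn/2)`. So the integrand is dominated by the Gaussian moment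
`r^{d-1} e^{-(nL/4) r²}`, whose integral over `(0, ∞)` is `Γ(d/2)/2 · (nL/4)^{-d/2}`.
-/

open Real MeasureTheory Set

lemma integral_Ioi_rpow_sub_one_mul_exp_neg_mul_sq {s a : ℝ} (hs : 0 < s) (ha : 0 < a) :
    ∫ r in Ioi (0 : ℝ), r ^ (s - 1) * exp (-a * r ^ 2) = Gamma (s / 2) / 2 * a ^ (-s / 2) := by
  have h := integral_rpow_mul_exp_neg_mul_rpow two_pos (q := s - 1) (by linarith) ha
  simp only [rpow_two, sub_add_cancel] at h
  rw [h]
  ring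

lemma setIntegral_le_of_le_rpow_sub_one_mul_exp_neg_mul_sq {f : ℝ → ℝ} {S : Set ℝ} {s a : ℝ}
    (hS : MeasurableSet S) (hS_pos : S ⊆ Ioi 0) (hs : 0 < s) (ha : 0 < a)
    (hf_nonneg : ∀ r ∈ S, 0 ≤ f r) (hf_le : ∀ r ∈ S, f r ≤ r ^ (s - 1) * exp (-a * r ^ 2)) :
    ∫ r in S, f r ≤ Gamma (s / 2) / 2 * a ^ (-s / 2) := by
  have hint := integrableOn_rpow_mul_exp_neg_mul_sq ha (s := s - 1) (by linarith)
  calc ∫ r in S, f r ≤ ∫ r in S, r ^ (s - 1) * exp (-a * r ^ 2) :=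
        integral_mono_of_nonneg (ae_restrict_of_forall_mem hS hf_nonneg) (hint.mono_set hS_pos)
          (ae_restrict_of_forall_mem hS hf_le)
    _ ≤ ∫ r in Ioi (0 : ℝ), r ^ (s - 1) * exp (-a * r ^ 2) := by
        refine setIntegral_mono_set hint ?_ hS_pos.eventuallyLE
        exact ae_restrict_of_forall_mem measurableSet_Ioi
          fun r hr => mul_nonneg (rpow_nonneg (le_of_lt hr) _) (exp_nonneg _)
    _ = Gamma (s / 2) / 2 * a ^ (-s / 2) := integral_Ioi_rpow_sub_one_mul_exp_neg_mul_sq hs ha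

lemma mul_pow_four_lt_one_of_lt_rpow {n r : ℝ} (hn : 0 < n) (hr : 0 < r)
    (hrn : r < n ^ (-(1 : ℝ) / 4)) : n * r ^ 4 < 1 := by
  have h : r ^ 4 < n⁻¹ := by
    calc r ^ 4 < (n ^ (-(1 : ℝ) / 4)) ^ 4 := by gcongr
      _ = n⁻¹ := by rw [← rpow_mul_natCast hn.le]; norm_num [rpow_neg_one]
  calc n * r ^ 4 < n * n⁻¹ := by gcongr
    _ = 1 := mul_inv_cancel₀ hn.ne'

lemma log_pi_mul_div_two_le_four_mul_log {n r : ℝ} (hn : 0 < n) (hr : 0 < r)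
    (hrn : r < n ^ (-(1 : ℝ) / 4)) : log (π * n / 2) ≤ 4 * log (π / (2 * r)) := by
  have hnr := mul_pow_four_lt_one_of_lt_rpow hn hr hrn
  have hpi : 8 * π ≤ π ^ 4 := by
    have hpi_cube : (2 : ℝ) ^ 3 ≤ π ^ 3 := by gcongr; linarith [pi_gt_three]
    nlinarith [pi_pos]
  have hpow : 4 * log (π / (2 * r)) = log ((π / (2 * r)) ^ 4) := by
    rw [log_pow]; norm_num
  rw [hpow]
  refine log_le_log (by positivity) ?_
  rw [div_pow, le_div_iff₀ (by positivity)]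
  nlinarith [pi_pos]

theorem Dn_sup_main_integral_general (d : ℝ) (hd : 2 < d) :
    ∃ C : ℝ, 0 < C ∧ ∀ n : ℕ, 2 ≤ n →
      (∫ r in Set.Ioo (0 : ℝ) ((n : ℝ) ^ (-(1 : ℝ) / 4)),
          r ^ (d - 1) * Real.exp (-(n : ℝ) * r ^ 2 * Real.log (Real.pi / (2 * r))))
        ≤ C * ((n : ℝ) * Real.log (Real.pi * n / 2)) ^ (-d / 2) := by
  have hΓ : 0 < Gamma (d / 2) := Gamma_pos_of_pos (by linarith)
  refine ⟨Gamma (d / 2) / 2 * 4 ^ (d / 2), by positivity, fun n hn => ?_⟩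
  have hn_pos : (0 : ℝ) < n := by positivity
  have hL : 0 < log (π * n / 2) := by
    have : (2 : ℝ) ≤ n := by exact_mod_cast hn
    exact log_pos (by nlinarith [pi_gt_three])
  calc _ ≤ Gamma (d / 2) / 2 * (n * log (π * n / 2) / 4) ^ (-d / 2) := by
        refine setIntegral_le_of_le_rpow_sub_one_mul_exp_neg_mul_sq measurableSet_Ioo
          Ioo_subset_Ioi_self (by linarith) (by positivity) (fun r hr => ?_) (fun r ⟨hr, hrn⟩ => ?_)
        · have := hr.1.le
          positivity
        · have hlog := log_pi_mul_div_two_le_four_mul_log hn_pos hr hrn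
          refine mul_le_mul_of_nonneg_left (exp_le_exp.mpr ?_) (rpow_nonneg hr.le _)
          nlinarith [mul_nonneg hn_pos.le (sq_nonneg r)]
    _ = _ := by
        rw [div_rpow (by positivity) (by norm_num), neg_div, rpow_neg (x := 4) (by norm_num),
          div_inv_eq_mul]
        ring

theorem Dn_sup_main_integral (d c : ℝ) (hd : 2 < d) (hc : 0 < c) :
    ∃ C : ℝ, 0 < C ∧ ∀ n : ℕ, 2 ≤ n →
      (∫ r in Set.Ioo (0 : ℝ) ((n : ℝ) ^ (-(1 : ℝ) / 4)),
          r ^ (d - 1) * Real.exp (-(n : ℝ) * r ^ 2 * Real.log (Real.pi / (2 * r))))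
        ≤ C * ((n : ℝ) * Real.log (Real.pi * n / 2)) ^ (-d / 2) :=
  Dn_sup_main_integral_general d hd
end

section
/- Let d ≥ 6 and C > 0. If G : ℤ^d → ℝ satisfies 0 ≤ G(x) ≤ δ_{0,x} + C (max(|x|,1))^{2-d}/log(max(|x|,e)) for all x, then the triangle sum ∑_{x,y ∈ ℤ^d} G(x) G(y−x) G(−y) = G^{*3}(0) is finite. -/
/-
By AM-GM, `G x * G (y - x) * G (-y)` is at most a third of the sum of the three pairwise products
of `G ^ (3/2)` at two of the three points, and each of these is summable over `(x, y)` once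
`G ^ (3/2)` is summable on `ℤ^d` (a discrete Young inequality). For `x ≠ 0` the hypothesis gives
`G x ^ (3/2) ≲ |x| ^ (-3(d-2)/2) (log |x|) ^ (-3/2) ≤ |x| ^ (-d) (log |x|) ^ (-3/2)`, the last step
being where `d ≥ 6` enters. Summing over sup-norm shells, which have `O(n ^ (d-1))` points, reduces
this to the Bertrand series `∑ 1 / (n (log n) ^ (3/2))`, which converges by Cauchy condensation.
-/

open Real

open Finset Filter

theorem mul_mul_le_rpow_three_halves {a b c : ℝ} (ha : 0 ≤ a) (hb : 0 ≤ b) (hc : 0 ≤ c) :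
    a * b * c ≤ ((a * b) ^ (3 / 2 : ℝ) + (b * c) ^ (3 / 2 : ℝ) + (c * a) ^ (3 / 2 : ℝ)) / 3 := by
  have rpow_eq {t : ℝ} (ht : 0 ≤ t) : t ^ (3 / 2 : ℝ) = √t ^ 3 := by
    rw [sqrt_eq_rpow, ← rpow_natCast, ← rpow_mul ht]; norm_num
  have hprod : √(a * b) * √(b * c) * √(c * a) = a * b * c := by
    rw [← sqrt_mul (by positivity), ← sqrt_mul (by positivity),
      show a * b * (b * c) * (c * a) = (a * b * c) ^ 2 by ring, sqrt_sq (by positivity)]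
  rw [rpow_eq (by positivity), rpow_eq (by positivity), rpow_eq (by positivity), ← hprod]
  have hp := sqrt_nonneg (a * b)
  have hq := sqrt_nonneg (b * c)
  have hr := sqrt_nonneg (c * a)
  nlinarith [sq_nonneg (√(a * b) - √(b * c)), sq_nonneg (√(b * c) - √(c * a)),
    sq_nonneg (√(c * a) - √(a * b)), add_nonneg (add_nonneg hp hq) hr]

theorem Summable.mul_comp_of_injective {A B : Type*} {F : A → ℝ} (hF : Summable F)
    (hF0 : 0 ≤ F) {i j : B → A} (hij : Function.Injective fun b => (i b, j b)) :
    Summable fun b => F (i b) * F (j b) :=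
  (hF.mul_of_nonneg hF hF0 hF0).comp_injective hij

theorem summable_triangle_of_summable_rpow {A : Type*} [AddGroup A] {G : A → ℝ}
    (hG0 : ∀ x, 0 ≤ G x) (hG : Summable fun x => G x ^ (3 / 2 : ℝ)) :
    Summable fun p : A × A => G p.1 * G (p.2 - p.1) * G (-p.2) := by
  have hF0 : 0 ≤ fun x => G x ^ (3 / 2 : ℝ) := fun x => rpow_nonneg (hG0 x) _
  have h₁ := hG.mul_comp_of_injective hF0 (i := fun p : A × A => p.1) (j := fun p => p.2 - p.1)
    (Function.LeftInverse.injective (g := fun q => (q.1, q.2 + q.1)) fun p => by simp)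
  have h₂ := hG.mul_comp_of_injective hF0 (i := fun p : A × A => p.2 - p.1) (j := fun p => -p.2)
    (Function.LeftInverse.injective (g := fun q => (-q.1 - q.2, -q.2)) fun p => by simp)
  have h₃ := hG.mul_comp_of_injective hF0 (i := fun p : A × A => -p.2) (j := fun p => p.1)
    (Function.LeftInverse.injective (g := fun q => (q.2, -q.1)) fun p => by simp)
  refine .of_nonneg_of_le (fun p => mul_nonneg (mul_nonneg (hG0 _) (hG0 _)) (hG0 _))
    (fun p => ?_) (((h₁.add h₂).add h₃).div_const 3)
  simp only [← mul_rpow (hG0 _) (hG0 _)]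
  exact mul_mul_le_rpow_three_halves (hG0 _) (hG0 _) (hG0 _)

theorem summable_inv_mul_max_log_rpow {p : ℝ} (hp : 1 < p) :
    Summable fun n : ℕ => ((n : ℝ) * max (log n) 1 ^ p)⁻¹ := by
  refine (summable_condensed_iff_of_nonneg (fun n => by positivity) fun m n hm hmn => ?_).1 ?_
  · have hm' : (0 : ℝ) < m := by exact_mod_cast hm
    gcongr
  · have hshift : Summable fun k : ℕ => 4 ^ p * ((((k + 1 : ℕ) : ℝ)) ^ p)⁻¹ :=
      ((summable_nat_add_iff 1).2 (summable_nat_rpow_inv.2 hp)).mul_left _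
    refine hshift.of_nonneg_of_le (fun k => by positivity) fun k => ?_
    have hlog : (k + 1 : ℝ) / 4 ≤ max (k * log 2) 1 := by
      have := log_two_gt_d9
      rcases le_total (k : ℝ) 1 with hk | hk
      · exact (by linarith : (k + 1 : ℝ) / 4 ≤ 1).trans (le_max_right _ _)
      · exact (by nlinarith : (k + 1 : ℝ) / 4 ≤ k * log 2).trans (le_max_left _ _)
    push_cast
    rw [Real.log_pow, mul_inv, ← mul_assoc, mul_inv_cancel₀ (by positivity), one_mul]
    calc (max (k * log 2) 1 ^ p)⁻¹ ≤ (((k + 1 : ℝ) / 4) ^ p)⁻¹ := by gcongr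
      _ = 4 ^ p * (((k : ℝ) + 1) ^ p)⁻¹ := by
        rw [div_rpow (by positivity) (by positivity), inv_div, div_eq_mul_inv]

section SupNatAbs

variable {ι : Type*} [Fintype ι]

def supNatAbs (x : ι → ℤ) : ℕ := univ.sup fun i => (x i).natAbs

theorem supNatAbs_le_iff [DecidableEq ι] {x : ι → ℤ} {n : ℕ} :
    supNatAbs x ≤ n ↔ x ∈ Fintype.piFinset fun _ => Icc (-n : ℤ) n := by
  simp only [supNatAbs, Finset.sup_le_iff, mem_univ, true_imp_iff, Fintype.mem_piFinset, mem_Icc]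
  exact forall_congr' fun i => by omega

theorem supNatAbs_eq_zero {x : ι → ℤ} : supNatAbs x = 0 ↔ x = 0 := by
  classical
  rw [← Nat.le_zero, supNatAbs_le_iff]
  simp [funext_iff]

theorem monotone_piFinset_Icc [DecidableEq ι] :
    Monotone fun n : ℕ => Fintype.piFinset fun _ : ι => Icc (-n : ℤ) n := fun m n hmn x => by
  simpa only [← supNatAbs_le_iff] using (le_trans · hmn)

theorem card_piFinset_Icc [DecidableEq ι] (n : ℕ) :
    #(Fintype.piFinset fun _ : ι => Icc (-n : ℤ) n) = (2 * n + 1) ^ Fintype.card ι := by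
  simp only [Fintype.card_piFinset, Int.card_Icc, prod_const, card_univ]
  congr 1
  omega

theorem card_piFinset_Icc_succ_sdiff_le [DecidableEq ι] (k : ℕ) :
    #((Fintype.piFinset fun _ : ι => Icc (-(k + 1 : ℕ) : ℤ) (k + 1 : ℕ)) \
        Fintype.piFinset fun _ => Icc (-k : ℤ) k) ≤
      2 * Fintype.card ι * (3 * (k + 1)) ^ (Fintype.card ι - 1) := by
  set d := Fintype.card ι
  rw [card_sdiff_of_subset (monotone_piFinset_Icc k.le_succ), card_piFinset_Icc,
    card_piFinset_Icc]
  have hpow := abs_pow_sub_pow_le (α := ℤ) (2 * k + 3) (2 * k + 1) d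
  rw [show (2 * k + 3 : ℤ) - (2 * k + 1) = 2 by ring, abs_two,
    abs_of_nonneg (by positivity : (0 : ℤ) ≤ 2 * k + 3),
    abs_of_nonneg (by positivity : (0 : ℤ) ≤ 2 * k + 1), max_eq_left (by omega)] at hpow
  have hmax : (2 * k + 3 : ℤ) ^ (d - 1) ≤ (3 * (k + 1)) ^ (d - 1) := by gcongr; omega
  rw [Nat.sub_le_iff_le_add]
  have key : (2 * k + 3 : ℤ) ^ d ≤ 2 * d * (3 * (k + 1)) ^ (d - 1) + (2 * k + 1) ^ d := by
    nlinarith [le_abs_self ((2 * k + 3 : ℤ) ^ d - (2 * k + 1) ^ d)]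
  exact_mod_cast key

theorem summable_comp_supNatAbs {g : ℕ → ℝ} (hg : ∀ n, 0 ≤ g n)
    (hs : Summable fun n : ℕ => (n : ℝ) ^ (Fintype.card ι - 1) * g n) :
    Summable fun x : ι → ℤ => g (supNatAbs x) := by
  classical
  set d := Fintype.card ι
  set box : ℕ → Finset (ι → ℤ) := fun n => Fintype.piFinset fun _ => Icc (-n : ℤ) n
  have hs' := (summable_nat_add_iff 1).2 hs
  refine summable_of_sum_le (c := g 0 + 2 * d * 3 ^ (d - 1) *
    ∑' k : ℕ, ((k + 1 : ℕ) : ℝ) ^ (d - 1) * g (k + 1)) (fun x => hg _) fun u => ?_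
  have hu : u ⊆ box (u.sup supNatAbs) := fun x hx => supNatAbs_le_iff.1 (le_sup hx)
  have hshell (k : ℕ) : ∀ x ∈ box (k + 1) \ box k, g (supNatAbs x) = g (k + 1) := by
    intro x hx
    simp only [box, Finset.mem_sdiff, ← supNatAbs_le_iff] at hx
    rw [show supNatAbs x = k + 1 by omega]
  calc ∑ x ∈ u, g (supNatAbs x)
      ≤ ∑ x ∈ box (u.sup supNatAbs), g (supNatAbs x) :=
        sum_le_sum_of_subset_of_nonneg hu fun _ _ _ => hg _
    _ = g 0 + ∑ k ∈ range (u.sup supNatAbs), #(box (k + 1) \ box k) * g (k + 1) := by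
        rw [sum_eq_sum_range_sdiff box monotone_piFinset_Icc]
        congr 1
        · simp only [box, CharP.cast_eq_zero, neg_zero, Icc_self, Fintype.piFinset_singleton,
            sum_singleton]
          exact congrArg g (sup_bot _)
        · refine sum_congr rfl fun k _ => ?_
          rw [sum_congr rfl (hshell k), sum_const, nsmul_eq_mul]
    _ ≤ g 0 + ∑ k ∈ range (u.sup supNatAbs),
          2 * d * 3 ^ (d - 1) * (((k + 1 : ℕ) : ℝ) ^ (d - 1) * g (k + 1)) := by
        refine add_le_add_right (sum_le_sum fun k _ => ?_) _
        rw [← mul_assoc]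
        refine mul_le_mul_of_nonneg_right ?_ (hg _)
        exact_mod_cast (card_piFinset_Icc_succ_sdiff_le k).trans_eq (by rw [mul_pow]; ring)
    _ ≤ _ := by
        rw [← mul_sum]
        gcongr
        exact hs'.sum_le_tsum _ fun k _ => mul_nonneg (by positivity) (hg _)

end SupNatAbs

theorem natCast_supNatAbs_le_znorm {d : ℕ} (x : Fin d → ℤ) : (supNatAbs x : ℝ) ≤ znorm x := by
  refine le_trans (Nat.cast_le.2 (Finset.sup_le fun i _ => Nat.le_floor ?_))
    (Nat.floor_le (sqrt_nonneg _))
  rw [Nat.cast_natAbs, Int.cast_abs, ← sqrt_sq_eq_abs]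
  exact sqrt_le_sqrt
    (single_le_sum (f := fun j => ((x j : ℝ)) ^ 2) (fun j _ => sq_nonneg _) (mem_univ i))

theorem rpow_three_halves_le_of_le_mul_rpow_div {d : ℕ} (hd : 6 ≤ d) {C t M y : ℝ} (hC : 0 ≤ C)
    (ht : 1 ≤ t) (hM : 0 < M) (hy0 : 0 ≤ y) (hy : y ≤ C * t ^ ((2 : ℝ) - d) / M) :
    y ^ (3 / 2 : ℝ) ≤ C ^ (3 / 2 : ℝ) * (t ^ d * M ^ (3 / 2 : ℝ))⁻¹ := by
  have hd' : (6 : ℝ) ≤ d := by exact_mod_cast hd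
  have ht0 : 0 < t := one_pos.trans_le ht
  have hexp : t ^ ((2 - d : ℝ) * (3 / 2)) ≤ (t ^ d)⁻¹ := by
    rw [← rpow_natCast, ← rpow_neg ht0.le]
    exact rpow_le_rpow_of_exponent_le ht (by linarith)
  calc y ^ (3 / 2 : ℝ) ≤ (C * t ^ ((2 : ℝ) - d) / M) ^ (3 / 2 : ℝ) := by gcongr
    _ = C ^ (3 / 2 : ℝ) * t ^ ((2 - d : ℝ) * (3 / 2)) * (M ^ (3 / 2 : ℝ))⁻¹ := by
      rw [div_rpow (by positivity) hM.le, mul_rpow hC (by positivity), ← rpow_mul ht0.le,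
        div_eq_mul_inv]
    _ ≤ C ^ (3 / 2 : ℝ) * (t ^ d)⁻¹ * (M ^ (3 / 2 : ℝ))⁻¹ := by gcongr
    _ = C ^ (3 / 2 : ℝ) * (t ^ d * M ^ (3 / 2 : ℝ))⁻¹ := by rw [mul_inv, mul_assoc]

theorem mul_max_rpow_div_log_max_le {d : ℕ} (hd : 2 ≤ d) {C r t : ℝ} (hC : 0 ≤ C)
    (ht : 1 ≤ t) (htr : t ≤ r) :
    C * max r 1 ^ ((2 : ℝ) - d) / log (max r (exp 1)) ≤
      C * t ^ ((2 : ℝ) - d) / max (log t) 1 := by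
  have hd' : (2 : ℝ) ≤ d := by exact_mod_cast hd
  have ht0 : 0 < t := one_pos.trans_le ht
  have hlog : max (log t) 1 ≤ log (max r (exp 1)) := by
    refine max_le (log_le_log ht0 (htr.trans (le_max_left _ _))) ?_
    calc (1 : ℝ) = log (exp 1) := (log_exp 1).symm
      _ ≤ log (max r (exp 1)) := log_le_log (exp_pos 1) (le_max_right _ _)
  gcongr C * ?_ / ?_
  exact rpow_le_rpow_of_nonpos ht0 (htr.trans (le_max_left _ _)) (by linarith)

theorem triangle_condition_with_log (d : ℕ) (hd : 6 ≤ d) (C : ℝ) (hC : 0 < C)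
    (G : (Fin d → ℤ) → ℝ)
    (hG : ∀ x, 0 ≤ G x ∧
      G x ≤ (if x = 0 then 1 else 0) +
        C * (max (znorm x) 1) ^ ((2 : ℝ) - d) / Real.log (max (znorm x) (Real.exp 1))) :
    Summable (fun p : (Fin d → ℤ) × (Fin d → ℤ) => G p.1 * G (p.2 - p.1) * G (-p.2)) := by
  have hG0 x := (hG x).1
  refine summable_triangle_of_summable_rpow hG0 ?_
  set g : ℕ → ℝ := fun n => C ^ (3 / 2 : ℝ) * ((n : ℝ) ^ d * max (log n) 1 ^ (3 / 2 : ℝ))⁻¹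
  have hg : Summable fun x : Fin d → ℤ => g (supNatAbs x) := by
    refine summable_comp_supNatAbs (fun n => by positivity) ?_
    refine ((summable_inv_mul_max_log_rpow (by norm_num : (1 : ℝ) < 3 / 2)).mul_left
      (C ^ (3 / 2 : ℝ))).congr fun n => ?_
    rw [Fintype.card_fin, mul_left_comm]
    congr 1
    rcases eq_or_ne (n : ℝ) 0 with hn | hn
    · simp [hn, show d ≠ 0 by omega]
    · rw [← pow_sub_one_mul (by omega : d ≠ 0)]
      field_simp
  refine hg.of_norm_bounded_eventually ?_
  filter_upwards [eventually_cofinite_ne 0] with x hx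
  have ht : (1 : ℝ) ≤ supNatAbs x :=
    Nat.one_le_cast.2 (Nat.pos_of_ne_zero (mt supNatAbs_eq_zero.1 hx))
  rw [norm_of_nonneg (rpow_nonneg (hG0 x) _)]
  refine rpow_three_halves_le_of_le_mul_rpow_div hd hC.le ht (lt_max_of_lt_right one_pos) (hG0 x) ?_
  calc G x ≤ C * max (znorm x) 1 ^ ((2 : ℝ) - d) / log (max (znorm x) (exp 1)) := by
        simpa [hx] using (hG x).2
    _ ≤ _ := mul_max_rpow_div_log_max_le (by omega) hC.le ht (natCast_supNatAbs_le_znorm x)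
end
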